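/- arXiv:1909.05419 — 4 statements merged into one kernel-verified Lean document; each statement's English description precedes it below -/
import Mathlib

section
/- Let φ: ℝ^n → ℝ be convex lower semicontinuous with minimum 0 at the origin, B an n × d matrix, λ, α > 0, and z ∈ ℝ^d. Define W(x) = (1/(2λ))‖x−z‖² + φ_α(Bx) where φ_α = φ − env_α φ. If λ < α/‖B‖² then W is strictly convex; if λ = α/‖B‖² then W is convex. -/
lemma sq_combo {E : Type*} [NormedAddCommGroup E] [InnerProductSpace ℝ E]
    (x y : E) (a b : ℝ) (hab : a + b = 1) :
    ‖a • x + b • y‖ ^ 2 = a * ‖x‖ ^ 2 + b * ‖y‖ ^ 2 - a * b * ‖x - y‖ ^ 2 := by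
  have hb : b = 1 - a := by linarith
  subst hb
  rw [← real_inner_self_eq_norm_sq, ← real_inner_self_eq_norm_sq,
    ← real_inner_self_eq_norm_sq, ← real_inner_self_eq_norm_sq]
  simp only [inner_add_left, inner_add_right, inner_sub_left, inner_sub_right,
    real_inner_smul_left, real_inner_smul_right]
  ring

/-- Moreau envelope of `f` with parameter `α`. -/
noncomputable def moreauEnv {E : Type*} [NormedAddCommGroup E]
    (α : ℝ) (f : E → ℝ) (x : E) : ℝ :=
  ⨅ w : E, f w + (1 / (2 * α)) * ‖w - x‖ ^ 2

set_option maxHeartbeats 1000000 in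
theorem stmt_7 {n d : ℕ} (φ : EuclideanSpace ℝ (Fin n) → ℝ)
    (hconv : ConvexOn ℝ Set.univ φ) (hlsc : LowerSemicontinuous φ)
    (hzero : φ 0 = 0) (hmin : ∀ u, 0 ≤ φ u)
    (B : EuclideanSpace ℝ (Fin d) →L[ℝ] EuclideanSpace ℝ (Fin n))
    (lam α : ℝ) (hlam : 0 < lam) (hα : 0 < α) (z : EuclideanSpace ℝ (Fin d)) :
    (lam < α / ‖B‖ ^ 2 →
      StrictConvexOn ℝ Set.univ
        (fun x => (1 / (2 * lam)) * ‖x - z‖ ^ 2 + (φ (B x) - moreauEnv α φ (B x)))) ∧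
    (lam = α / ‖B‖ ^ 2 →
      ConvexOn ℝ Set.univ
        (fun x => (1 / (2 * lam)) * ‖x - z‖ ^ 2 + (φ (B x) - moreauEnv α φ (B x)))) := by
  set m := moreauEnv α φ with hm
  -- basic facts about the Moreau envelope
  have henv_le : ∀ (y w : EuclideanSpace ℝ (Fin n)),
      m y ≤ φ w + (1 / (2 * α)) * ‖w - y‖ ^ 2 := by
    intro y w
    rw [hm, moreauEnv]
    refine ciInf_le ⟨0, ?_⟩ w
    rintro v ⟨u, rfl⟩
    have := hmin u
    positivity
  -- convexity of k : y ↦ (1/(2α))‖y‖² - m y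
  have hk_conv : ConvexOn ℝ Set.univ
      (fun y : EuclideanSpace ℝ (Fin n) => (1 / (2 * α)) * ‖y‖ ^ 2 - m y) := by
    refine ⟨convex_univ, ?_⟩
    intro x _ y _ a b ha hb hab
    have hb' : b = 1 - a := by linarith
    subst hb'
    simp only [smul_eq_mul]
    rw [sub_le_iff_le_add]
    have key : ∀ w : EuclideanSpace ℝ (Fin n),
        (1 / (2 * α)) * ‖a • x + (1 - a) • y‖ ^ 2 -
          (a * ((1 / (2 * α)) * ‖x‖ ^ 2 - m x) +
            (1 - a) * ((1 / (2 * α)) * ‖y‖ ^ 2 - m y)) ≤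
        φ w + (1 / (2 * α)) * ‖w - (a • x + (1 - a) • y)‖ ^ 2 := by
      intro w
      have hx := henv_le x w
      have hy := henv_le y w
      have h1 : ‖a • x + (1 - a) • y‖ ^ 2 =
          a * ‖x‖ ^ 2 + (1 - a) * ‖y‖ ^ 2 - a * (1 - a) * ‖x - y‖ ^ 2 :=
        sq_combo x y a (1 - a) (by ring)
      have h2 : w - (a • x + (1 - a) • y) = a • (w - x) + (1 - a) • (w - y) := by
        module
      have h3 : ‖w - (a • x + (1 - a) • y)‖ ^ 2 =
          a * ‖w - x‖ ^ 2 + (1 - a) * ‖w - y‖ ^ 2 - a * (1 - a) * ‖x - y‖ ^ 2 := by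
        rw [h2, sq_combo _ _ a (1 - a) (by ring)]
        congr 2
        rw [show w - x - (w - y) = y - x by abel, norm_sub_rev]
      rw [h1, h3]
      have hpos : (0:ℝ) < 1 / (2 * α) := by positivity
      nlinarith [mul_le_mul_of_nonneg_left hx ha, mul_le_mul_of_nonneg_left hy hb]
    have hmle : (1 / (2 * α)) * ‖a • x + (1 - a) • y‖ ^ 2 -
        (a * ((1 / (2 * α)) * ‖x‖ ^ 2 - m x) +
          (1 - a) * ((1 / (2 * α)) * ‖y‖ ^ 2 - m y)) ≤
        m (a • x + (1 - a) • y) := by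
      rw [hm, moreauEnv]
      exact le_ciInf key
    linarith
  -- convexity of x ↦ φ(Bx) + k(Bx)
  have hcomp : ConvexOn ℝ Set.univ
      (fun x : EuclideanSpace ℝ (Fin d) =>
        φ (B x) + ((1 / (2 * α)) * ‖B x‖ ^ 2 - m (B x))) := by
    have hsum := hconv.add hk_conv
    refine ⟨convex_univ, ?_⟩
    intro x _ y _ a b ha hb hab
    have hB : B (a • x + b • y) = a • B x + b • B y := by
      rw [map_add, map_smul, map_smul]
    simp only [hB]
    exact hsum.2 (Set.mem_univ (B x)) (Set.mem_univ (B y)) ha hb hab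
  -- operator norm bound
  have hBle : ∀ u : EuclideanSpace ℝ (Fin d), ‖B u‖ ^ 2 ≤ ‖B‖ ^ 2 * ‖u‖ ^ 2 := by
    intro u
    have h := B.le_opNorm u
    nlinarith [norm_nonneg (B u), norm_nonneg u, B.opNorm_nonneg]
  -- the master inequality
  have key : ∀ (x y : EuclideanSpace ℝ (Fin d)) (a b : ℝ), 0 ≤ a → 0 ≤ b → a + b = 1 →
      (1 / (2 * lam)) * ‖(a • x + b • y) - z‖ ^ 2 +
        (φ (B (a • x + b • y)) - m (B (a • x + b • y))) ≤
      a * ((1 / (2 * lam)) * ‖x - z‖ ^ 2 + (φ (B x) - m (B x))) +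
      b * ((1 / (2 * lam)) * ‖y - z‖ ^ 2 + (φ (B y) - m (B y))) -
      a * b * ((1 / (2 * lam)) * ‖x - y‖ ^ 2 - (1 / (2 * α)) * ‖B (x - y)‖ ^ 2) := by
    intro x y a b ha hb hab
    have hb' : b = 1 - a := by linarith
    subst hb'
    have h1 : (a • x + (1 - a) • y) - z = a • (x - z) + (1 - a) • (y - z) := by
      module
    have h2 : ‖(a • x + (1 - a) • y) - z‖ ^ 2 =
        a * ‖x - z‖ ^ 2 + (1 - a) * ‖y - z‖ ^ 2 - a * (1 - a) * ‖x - y‖ ^ 2 := by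
      rw [h1, sq_combo _ _ a (1 - a) (by ring)]
      congr 2
      rw [show x - z - (y - z) = x - y by abel]
    have hB : B (a • x + (1 - a) • y) = a • B x + (1 - a) • B y := by
      rw [map_add, map_smul, map_smul]
    have h3 : ‖B (a • x + (1 - a) • y)‖ ^ 2 =
        a * ‖B x‖ ^ 2 + (1 - a) * ‖B y‖ ^ 2 - a * (1 - a) * ‖B (x - y)‖ ^ 2 := by
      rw [hB, sq_combo _ _ a (1 - a) (by ring)]
      congr 2
      rw [← map_sub]
    have h4 := hcomp.2 (Set.mem_univ x) (Set.mem_univ y) ha hb hab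
    simp only [smul_eq_mul] at h4
    rw [h3] at h4
    rw [h2]
    nlinarith [h4]
  constructor
  · -- strict case
    intro hlt
    have hBpos : 0 < ‖B‖ := by
      rcases lt_or_eq_of_le B.opNorm_nonneg with h | h
      · exact h
      · exfalso; rw [← h] at hlt; simp at hlt; linarith
    have hmul : lam * ‖B‖ ^ 2 < α := by
      rw [lt_div_iff₀ (by positivity)] at hlt; linarith
    refine ⟨convex_univ, ?_⟩
    intro x _ y _ hxy a b ha hb hab
    have hk := key x y a b (le_of_lt ha) (le_of_lt hb) hab
    have hxy' : 0 < ‖x - y‖ := by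
      rw [norm_pos_iff, sub_ne_zero]; exact hxy
    have hcoef : 0 < 1 / (2 * lam) - ‖B‖ ^ 2 / (2 * α) := by
      rw [sub_pos, div_lt_div_iff₀ (by positivity) (by positivity)]
      nlinarith
    have hD : 0 < (1 / (2 * lam)) * ‖x - y‖ ^ 2 - (1 / (2 * α)) * ‖B (x - y)‖ ^ 2 := by
      have h6 := hBle (x - y)
      have h5 : (0:ℝ) < 1 / (2 * α) := by positivity
      have h7 : ‖B‖ ^ 2 / (2 * α) * ‖x - y‖ ^ 2 = (1 / (2 * α)) * (‖B‖ ^ 2 * ‖x - y‖ ^ 2) := by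
        ring
      nlinarith [mul_pos hcoef (mul_pos hxy' hxy'), mul_le_mul_of_nonneg_left h6 (le_of_lt h5),
        sq_nonneg ‖x - y‖]
    have hab' : 0 < a * b := mul_pos ha hb
    simp only [smul_eq_mul]
    have := mul_pos hab' hD
    linarith [hk]
  · -- equality case
    intro heq
    have hBpos : 0 < ‖B‖ := by
      rcases lt_or_eq_of_le B.opNorm_nonneg with h | h
      · exact h
      · exfalso; rw [← h] at heq; simp at heq; linarith
    have hmul : lam * ‖B‖ ^ 2 = α := by
      rw [heq]; field_simp
    refine ⟨convex_univ, ?_⟩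
    intro x _ y _ a b ha hb hab
    have hk := key x y a b ha hb hab
    have hD : 0 ≤ (1 / (2 * lam)) * ‖x - y‖ ^ 2 - (1 / (2 * α)) * ‖B (x - y)‖ ^ 2 := by
      have h6 := hBle (x - y)
      have h5 : (0:ℝ) < 1 / (2 * α) := by positivity
      have hcoef : 0 ≤ 1 / (2 * lam) - ‖B‖ ^ 2 / (2 * α) := by
        rw [sub_nonneg, div_le_div_iff₀ (by positivity) (by positivity)]
        nlinarith
      have h7 : ‖B‖ ^ 2 / (2 * α) * ‖x - y‖ ^ 2 = (1 / (2 * α)) * (‖B‖ ^ 2 * ‖x - y‖ ^ 2) := by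
        ring
      nlinarith [mul_le_mul_of_nonneg_left h6 (le_of_lt h5),
        mul_nonneg hcoef (sq_nonneg ‖x - y‖)]
    simp only [smul_eq_mul]
    have := mul_nonneg (mul_nonneg ha hb) hD
    linarith [hk]
end

section
/- Let φ be proper convex lower semicontinuous on ℝ^n, and F(x) = (1/(2λ))‖x−z‖² − env_α φ(Bx). If λ < α/‖B‖² then F is strictly convex on ℝ^d; if λ = α/‖B‖² then F is convex. -/
/-!
Writing `F x = (1/(2λ)) ‖x - z‖² - env_α φ (B x)`, the first term is `1/λ`-strongly convex. The
envelope is an infimum of the functions `u ↦ φ w + ‖w - u‖²/(2α)`, each of which is `(-1/α)`-strongly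
concave, so `env_α φ` is `(-1/α)`-strongly concave (i.e. `env_α φ - ‖·‖²/(2α)` is concave) as soon
as the infimum is finite, which an affine minorant of `φ` guarantees. Composing with `B` costs the
factor `‖B‖²`, so `F` is `(1/λ - ‖B‖²/α)`-strongly convex.
-/

open Set

theorem ConvexOn.exists_continuousLinearMap_add_le {E : Type*} [AddCommGroup E] [Module ℝ E]
    [TopologicalSpace E] [IsTopologicalAddGroup E] [ContinuousSMul ℝ E] [LocallyConvexSpace ℝ E]
    {φ : E → ℝ} (hφ : ConvexOn ℝ univ φ) (hφc : LowerSemicontinuous φ) :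
    ∃ (L : E →L[ℝ] ℝ) (c : ℝ), ∀ w, L w + c ≤ φ w := by
  obtain ⟨L, c, hle, -⟩ := hφ.exists_affine_le_of_lt (𝕜 := ℝ) (x := 0) (a := φ 0 - 1)
    (mem_univ 0) (by linarith) isClosed_univ (hφc.lowerSemicontinuousOn univ)
  exact ⟨L, c, fun w => by simpa using hle ⟨w, mem_univ w⟩⟩

theorem StrongConvexOn.sub_strongConcaveOn {E : Type*} [NormedAddCommGroup E] [NormedSpace ℝ E]
    {s : Set E} {m n : ℝ} {f g : E → ℝ} (hf : StrongConvexOn s m f)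
    (hg : StrongConcaveOn s n g) : StrongConvexOn s (m + n) (f - g) := by
  unfold StrongConvexOn
  convert UniformConvexOn.sub hf hg using 1
  funext r
  simp only [Pi.add_apply]
  ring

theorem StrongConcaveOn.comp_continuousLinearMap {E F : Type*} [NormedAddCommGroup E]
    [NormedSpace ℝ E] [NormedAddCommGroup F] [NormedSpace ℝ F] {s : Set F} {m : ℝ} {f : F → ℝ}
    (hf : StrongConcaveOn s m f) (hm : m ≤ 0) (B : E →L[ℝ] F) :
    StrongConcaveOn (B ⁻¹' s) (m * ‖B‖ ^ 2) (f ∘ B) := by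
  refine ⟨hf.1.linear_preimage B.toLinearMap, fun x hx y hy a b ha hb hab => ?_⟩
  have hBxy : ‖B x - B y‖ ≤ ‖B‖ * ‖x - y‖ := by
    rw [← map_sub]
    exact B.le_opNorm _
  have hmod : m / 2 * (‖B‖ * ‖x - y‖) ^ 2 ≤ m / 2 * ‖B x - B y‖ ^ 2 :=
    mul_le_mul_of_nonpos_left (pow_le_pow_left₀ (norm_nonneg _) hBxy 2) (by linarith)
  simp only [Function.comp_apply, map_add, map_smul]
  calc a • f (B x) + b • f (B y) + a * b * (m * ‖B‖ ^ 2 / 2 * ‖x - y‖ ^ 2)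
      ≤ a • f (B x) + b • f (B y) + a * b * (m / 2 * ‖B x - B y‖ ^ 2) := by
        rw [show m * ‖B‖ ^ 2 / 2 * ‖x - y‖ ^ 2 = m / 2 * (‖B‖ * ‖x - y‖) ^ 2 by ring]
        gcongr a • f (B x) + b • f (B y) + a * b * ?_
    _ ≤ f (a • B x + b • B y) := hf.2 hx hy ha hb hab

section InnerProductSpace

variable {E : Type*} [NormedAddCommGroup E] [InnerProductSpace ℝ E]

theorem norm_smul_add_smul_sq {a b : ℝ} (hab : a + b = 1) (x y : E) :
    ‖a • x + b • y‖ ^ 2 = a * ‖x‖ ^ 2 + b * ‖y‖ ^ 2 - a * b * ‖x - y‖ ^ 2 := by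
  obtain rfl : b = 1 - a := by linarith
  simp only [← real_inner_self_eq_norm_sq, inner_add_add_self, inner_sub_sub_self,
    real_inner_smul_left, real_inner_smul_right]
  ring

theorem strongConvexOn_mul_norm_sub_sq (c : ℝ) (z : E) :
    StrongConvexOn univ (2 * c) fun x => c * ‖x - z‖ ^ 2 := by
  refine ⟨convex_univ, fun x _ y _ a b _ _ hab => le_of_eq ?_⟩
  dsimp only
  have hshift : a • x + b • y - z = a • (x - z) + b • (y - z) := by
    rw [smul_sub, smul_sub, ← add_sub_add_comm, ← add_smul, hab, one_smul]
  rw [hshift, norm_smul_add_smul_sq hab, sub_sub_sub_cancel_right, smul_eq_mul, smul_eq_mul]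
  ring

variable {φ : E → ℝ} {α : ℝ}

theorem bddBelow_range_moreauEnv (hα : 0 < α) {L : E →L[ℝ] ℝ} {c : ℝ}
    (hL : ∀ w, L w + c ≤ φ w) (u : E) :
    BddBelow (range fun w => φ w + 1 / (2 * α) * ‖w - u‖ ^ 2) := by
  refine ⟨L u + c - α * ‖L‖ ^ 2 / 2, ?_⟩
  rintro _ ⟨w, rfl⟩
  have hLw : L u - ‖L‖ * ‖w - u‖ ≤ L w := by
    have := neg_le_of_abs_le (L.le_opNorm (w - u))
    rw [map_sub] at this
    linarith
  -- completing the square: `t²/(2α) - ‖L‖ t ≥ -α‖L‖²/2`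
  have hsq : 0 ≤ 1 / (2 * α) * (‖w - u‖ - α * ‖L‖) ^ 2 := by positivity
  have hexp : 1 / (2 * α) * (‖w - u‖ - α * ‖L‖) ^ 2
      = 1 / (2 * α) * ‖w - u‖ ^ 2 - ‖L‖ * ‖w - u‖ + α * ‖L‖ ^ 2 / 2 := by
    field_simp
    ring
  linarith [hL w]

theorem moreauEnv_le (hα : 0 < α) {L : E →L[ℝ] ℝ} {c : ℝ} (hL : ∀ w, L w + c ≤ φ w)
    (u w : E) : moreauEnv α φ u ≤ φ w + 1 / (2 * α) * ‖w - u‖ ^ 2 :=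
  ciInf_le (bddBelow_range_moreauEnv hα hL u) w

theorem strongConcaveOn_moreauEnv (hα : 0 < α) {L : E →L[ℝ] ℝ} {c : ℝ}
    (hL : ∀ w, L w + c ≤ φ w) : StrongConcaveOn univ (-(1 / α)) (moreauEnv α φ) := by
  refine ⟨convex_univ, fun u _ v _ a b ha hb hab => le_ciInf fun w => ?_⟩
  have hcombo := norm_smul_add_smul_sq hab (w - u) (w - v)
  rw [sub_sub_sub_cancel_left, norm_sub_rev v u] at hcombo
  have hshift : a • (w - u) + b • (w - v) = w - (a • u + b • v) := by
    rw [smul_sub, smul_sub, sub_add_sub_comm, ← add_smul, hab, one_smul]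
  rw [hshift] at hcombo
  have hu := mul_le_mul_of_nonneg_left (moreauEnv_le hα hL u w) ha
  have hv := mul_le_mul_of_nonneg_left (moreauEnv_le hα hL v w) hb
  rw [smul_eq_mul, smul_eq_mul, hcombo]
  linear_combination hu + hv + φ w * hab

theorem strongConvexOn_norm_sub_sq_sub_moreauEnv_comp {F : Type*} [NormedAddCommGroup F]
    [InnerProductSpace ℝ F] (hα : 0 < α) {L : E →L[ℝ] ℝ} {c : ℝ} (hL : ∀ w, L w + c ≤ φ w)
    (lam : ℝ) (z : F) (B : F →L[ℝ] E) :
    StrongConvexOn univ (1 / lam - ‖B‖ ^ 2 / α)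
      (fun x => (1 / (2 * lam)) * ‖x - z‖ ^ 2 - moreauEnv α φ (B x)) := by
  have h := (strongConvexOn_mul_norm_sub_sq (1 / (2 * lam)) z).sub_strongConcaveOn
    ((strongConcaveOn_moreauEnv hα hL).comp_continuousLinearMap
      (neg_nonpos.mpr (one_div_pos.mpr hα).le) B)
  rwa [show 2 * (1 / (2 * lam)) + -(1 / α) * ‖B‖ ^ 2 = 1 / lam - ‖B‖ ^ 2 / α by ring] at h

end InnerProductSpace

theorem stmt_9 {n d : ℕ} (φ : EuclideanSpace ℝ (Fin n) → ℝ)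
    (hconv : ConvexOn ℝ Set.univ φ) (hlsc : LowerSemicontinuous φ)
    (lam α : ℝ) (hlam : 0 < lam) (hα : 0 < α)
    (z : EuclideanSpace ℝ (Fin d))
    (B : EuclideanSpace ℝ (Fin d) →L[ℝ] EuclideanSpace ℝ (Fin n)) :
    (lam < α / ‖B‖ ^ 2 →
      StrictConvexOn ℝ Set.univ
        (fun x => (1 / (2 * lam)) * ‖x - z‖ ^ 2 - moreauEnv α φ (B x))) ∧
    (lam = α / ‖B‖ ^ 2 →
      ConvexOn ℝ Set.univ
        (fun x => (1 / (2 * lam)) * ‖x - z‖ ^ 2 - moreauEnv α φ (B x))) := by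
  obtain ⟨L, c, hL⟩ := hconv.exists_continuousLinearMap_add_le hlsc
  have hF := strongConvexOn_norm_sub_sq_sub_moreauEnv_comp hα hL lam z B
  refine ⟨fun hlt => hF.strictConvexOn ?_, fun heq => ?_⟩
  · have := one_div_lt_one_div_of_lt hlam hlt
    rw [one_div_div] at this
    linarith
  · have hm : 1 / lam - ‖B‖ ^ 2 / α = 0 := by rw [heq, one_div_div, sub_self]
    rw [hm] at hF
    exact strongConvexOn_zero.mp hF
end

section
/- Let f = ‖·‖ be the Euclidean norm on ℝ^d, α, β > 0, and f_α = f − env_α f. Then for nonzero x ∈ ℝ^d, prox_{βf_α}(x) = prox_{β|·|_α}(‖x‖)·(x/‖x‖), where |·|_α(t) = |t| − env_α|·|(t). -/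
/-- The set of minimizers defining the (possibly set-valued) proximity operator
of `f` with index `β` at `x`. -/
def proxSet {E : Type*} [NormedAddCommGroup E]
    (β : ℝ) (f : E → ℝ) (x : E) : Set E :=
  {w | ∀ u : E, f w + (1 / (2 * β)) * ‖w - x‖ ^ 2 ≤ f u + (1 / (2 * β)) * ‖u - x‖ ^ 2}

open Set

lemma sq_norm_sub_norm_le {E : Type*} [SeminormedAddCommGroup E] (u x : E) :
    (‖u‖ - ‖x‖) ^ 2 ≤ ‖u - x‖ ^ 2 :=
  sq_le_sq.2 ((abs_norm_sub_norm_le u x).trans (le_abs_self _))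

section Radial

variable {E : Type*} [NormedAddCommGroup E] [NormedSpace ℝ E]

lemma norm_div_norm_smul {x : E} (hx : x ≠ 0) (t : ℝ) : ‖(t / ‖x‖) • x‖ = |t| := by
  rw [norm_smul, Real.norm_eq_abs, abs_div, abs_norm, div_mul_cancel₀ _ (norm_ne_zero_iff.2 hx)]

lemma norm_div_norm_smul_sub {x : E} (hx : x ≠ 0) (t : ℝ) :
    ‖(t / ‖x‖) • x - x‖ = |t - ‖x‖| := by
  rw [← norm_div_norm_smul hx, sub_div, div_self (norm_ne_zero_iff.2 hx), sub_smul, one_smul]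

lemma exists_norm_eq_norm_sub_eq [Nontrivial E] (w : E) {r : ℝ} (hr : 0 ≤ r) :
    ∃ v : E, ‖v‖ = r ∧ ‖v - w‖ = |r - ‖w‖| := by
  rcases eq_or_ne w 0 with rfl | hw
  · obtain ⟨v, hv⟩ := exists_norm_eq E hr
    exact ⟨v, hv, by rw [sub_zero, norm_zero, sub_zero, hv, abs_of_nonneg hr]⟩
  · exact ⟨(r / ‖w‖) • w, by rw [norm_div_norm_smul hw, abs_of_nonneg hr],
      norm_div_norm_smul_sub hw r⟩

end Radial

lemma Function.Even.comp_abs {φ : ℝ → ℝ} (hφ : Function.Even φ) (t : ℝ) : φ |t| = φ t := by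
  rcases abs_choice t with h | h <;> rw [h]
  exact hφ t

section MoreauEnvelope

variable {E : Type*} [NormedAddCommGroup E]

lemma bddBelow_range_moreau {f : E → ℝ} (hf : BddBelow (range f)) {α : ℝ} (hα : 0 ≤ α)
    (x : E) : BddBelow (range fun w => f w + 1 / (2 * α) * ‖w - x‖ ^ 2) := by
  obtain ⟨m, hm⟩ := hf
  refine ⟨m, ?_⟩
  rintro _ ⟨w, rfl⟩
  have hfw : m ≤ f w := hm ⟨w, rfl⟩
  have hquad : 0 ≤ 1 / (2 * α) * ‖w - x‖ ^ 2 := by positivity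
  linarith

lemma moreauEnv_le_s13 {f : E → ℝ} (hf : BddBelow (range f)) {α : ℝ} (hα : 0 ≤ α) (x v : E) :
    moreauEnv α f x ≤ f v + 1 / (2 * α) * ‖v - x‖ ^ 2 :=
  ciInf_le (bddBelow_range_moreau hf hα x) v

lemma moreauEnv_neg_of_even {f : E → ℝ} (hf : Function.Even f) (α : ℝ) (x : E) :
    moreauEnv α f (-x) = moreauEnv α f x := by
  unfold moreauEnv
  rw [← (Equiv.neg E).iInf_comp]
  congr 1
  funext w
  rw [Equiv.neg_apply, hf, neg_sub_neg, norm_sub_rev]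

variable [NormedSpace ℝ E]

theorem moreauEnv_of_radial [Nontrivial E] {α : ℝ} (hα : 0 ≤ α) {φ : ℝ → ℝ}
    (hφb : BddBelow (range φ)) (hφ : Function.Even φ) {f : E → ℝ} (hf : ∀ v, f v = φ ‖v‖)
    (w : E) : moreauEnv α f w = moreauEnv α φ ‖w‖ := by
  have hfb : BddBelow (range f) :=
    hφb.mono (by rintro _ ⟨v, rfl⟩; exact ⟨‖v‖, (hf v).symm⟩)
  apply le_antisymm
  · refine le_ciInf fun s => ?_
    obtain ⟨v, hv, hvw⟩ := exists_norm_eq_norm_sub_eq w (abs_nonneg s)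
    have hsq : (|s| - ‖w‖) ^ 2 ≤ (s - ‖w‖) ^ 2 := by
      nlinarith [le_abs_self s, norm_nonneg w, sq_abs s]
    calc moreauEnv α f w ≤ f v + 1 / (2 * α) * ‖v - w‖ ^ 2 := moreauEnv_le_s13 hfb hα w v
      _ = φ s + 1 / (2 * α) * (|s| - ‖w‖) ^ 2 := by rw [hf, hv, hvw, sq_abs, hφ.comp_abs]
      _ ≤ φ s + 1 / (2 * α) * ‖s - ‖w‖‖ ^ 2 := by
        rw [Real.norm_eq_abs, sq_abs]; gcongr
  · refine le_ciInf fun v => ?_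
    calc moreauEnv α φ ‖w‖ ≤ φ ‖v‖ + 1 / (2 * α) * ‖‖v‖ - ‖w‖‖ ^ 2 := moreauEnv_le_s13 hφb hα _ _
      _ ≤ f v + 1 / (2 * α) * ‖v - w‖ ^ 2 := by
        rw [hf, Real.norm_eq_abs, sq_abs]; gcongr _ + _ * ?_; exact sq_norm_sub_norm_le v w

end MoreauEnvelope

section Prox

variable {E : Type*} [NormedAddCommGroup E] [NormedSpace ℝ E] [StrictConvexSpace ℝ E]

lemma sameRay_of_mem_proxSet {β : ℝ} (hβ : 0 < β) {φ : ℝ → ℝ} {f : E → ℝ}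
    (hf : ∀ v, f v = φ ‖v‖) {x w : E} (hx : x ≠ 0) (hw : w ∈ proxSet β f x) :
    SameRay ℝ w x := by
  have hcmp := hw ((‖w‖ / ‖x‖) • x)
  rw [hf, hf, norm_div_norm_smul hx, abs_norm, norm_div_norm_smul_sub hx] at hcmp
  have hsq : ‖w - x‖ ^ 2 ≤ |‖w‖ - ‖x‖| ^ 2 :=
    le_of_mul_le_mul_left (by linarith) (by positivity : (0 : ℝ) < 1 / (2 * β))
  have hle : ‖w - x‖ ≤ |‖w‖ - ‖x‖| :=
    (pow_le_pow_iff_left₀ (norm_nonneg _) (abs_nonneg _) two_ne_zero).1 hsq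
  exact sameRay_iff_norm_sub.2 (le_antisymm hle (abs_norm_sub_norm_le w x))

theorem proxSet_of_radial {β : ℝ} (hβ : 0 < β) {φ : ℝ → ℝ} (hφ : Function.Even φ)
    {f : E → ℝ} (hf : ∀ v, f v = φ ‖v‖) {x : E} (hx : x ≠ 0) :
    proxSet β f x = (fun t : ℝ => (t / ‖x‖) • x) '' proxSet β φ ‖x‖ := by
  ext w
  constructor
  · intro hw
    have hray := sameRay_of_mem_proxSet hβ hf hx hw
    refine ⟨‖w‖, fun s => ?_, ?_⟩
    · have hcmp := hw ((s / ‖x‖) • x)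
      rw [hf, hf, hray.norm_sub, norm_div_norm_smul hx, norm_div_norm_smul_sub hx,
        hφ.comp_abs] at hcmp
      rwa [Real.norm_eq_abs, Real.norm_eq_abs]
    · show (‖w‖ / ‖x‖) • x = w
      rw [div_eq_inv_mul, mul_smul, sameRay_iff_norm_smul_eq.1 hray, smul_smul,
        inv_mul_cancel₀ (norm_ne_zero_iff.2 hx), one_smul]
  · rintro ⟨t, ht, rfl⟩ u
    calc f ((t / ‖x‖) • x) + 1 / (2 * β) * ‖(t / ‖x‖) • x - x‖ ^ 2
        = φ t + 1 / (2 * β) * ‖t - ‖x‖‖ ^ 2 := by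
          rw [hf, norm_div_norm_smul hx, norm_div_norm_smul_sub hx, hφ.comp_abs,
            Real.norm_eq_abs]
      _ ≤ φ ‖u‖ + 1 / (2 * β) * ‖‖u‖ - ‖x‖‖ ^ 2 := ht ‖u‖
      _ ≤ f u + 1 / (2 * β) * ‖u - x‖ ^ 2 := by
        rw [hf, Real.norm_eq_abs, sq_abs]; gcongr _ + _ * ?_; exact sq_norm_sub_norm_le u x

end Prox

theorem stmt_13 {d : ℕ} (α β : ℝ) (hα : 0 < α) (hβ : 0 < β)
    (x : EuclideanSpace ℝ (Fin d)) (hx : x ≠ 0) :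
    proxSet β (fun w : EuclideanSpace ℝ (Fin d) =>
        ‖w‖ - moreauEnv α (fun v : EuclideanSpace ℝ (Fin d) => ‖v‖) w) x =
      (fun t : ℝ => (t / ‖x‖) • x) ''
        proxSet β (fun t : ℝ => |t| - moreauEnv α (fun s : ℝ => |s|) t) ‖x‖ := by
  have : Nontrivial (EuclideanSpace ℝ (Fin d)) := nontrivial_of_ne x 0 hx
  have habs_even : Function.Even fun s : ℝ => |s| := abs_neg
  have habs_bdd : BddBelow (range fun s : ℝ => |s|) := ⟨0, by rintro _ ⟨s, rfl⟩; exact abs_nonneg s⟩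
  refine proxSet_of_radial hβ (fun t => ?_) (fun w => ?_) hx
  · rw [moreauEnv_neg_of_even habs_even, abs_neg]
  · rw [abs_norm, moreauEnv_of_radial hα.le habs_bdd habs_even (fun v => (abs_norm v).symm)]
end

section
/- Let P, Q: ℝ^d → ℝ ∪ {+∞} with Q strongly convex with modulus 1/λ (λ > 0) and P convex. Suppose sequences satisfy y^k ∈ ∂P(x^k) and x^{k+1} ∈ argmin{Q(x) − ⟨y^k, x⟩}. Then Q(x^{k+1}) − P(x^{k+1}) ≤ Q(x^k) − P(x^k) − (1/(2λ))‖x^{k+1} − x^k‖². -/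
/-! The step from `x^k` to `x^{k+1}` minimises the strongly convex function `Q - ⟪y^k, ·⟫`,
so `Q - ⟪y^k, ·⟫` grows quadratically away from `x^{k+1}`; evaluating this growth at `x^k`
and combining it with the subgradient inequality of `P` at `x^k` gives the descent estimate. -/

/-- The (convex) subdifferential of `f` at `x`. -/
def subdiff {E : Type*} [NormedAddCommGroup E] [InnerProductSpace ℝ E]
    (f : E → ℝ) (x : E) : Set E :=
  {t | ∀ u : E, f x + (inner ℝ t (u - x) : ℝ) ≤ f u}

open Set

section StrongConvexity

variable {E : Type*} [NormedAddCommGroup E] [NormedSpace ℝ E] {s : Set E} {m : ℝ} {f g : E → ℝ}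

lemma StrongConvexOn.sub_concaveOn (hf : StrongConvexOn s m f) (hg : ConcaveOn ℝ s g) :
    StrongConvexOn s m (f - g) := by
  unfold StrongConvexOn at hf ⊢
  simpa using hf.sub (uniformConcaveOn_zero.2 hg)

lemma StrongConvexOn.add_sq_le_of_isMinOn (hf : StrongConvexOn s m f) {z u : E}
    (hmin : IsMinOn f s z) (hz : z ∈ s) (hu : u ∈ s) :
    f z + m / 2 * ‖u - z‖ ^ 2 ≤ f u := by
  -- Compare `f z` with `f` at the points `t • u + (1 - t) • z` of the segment, then let `t → 0`.
  have hseg : ∀ t ∈ Ioo (0 : ℝ) 1, (1 - t) * (m / 2 * ‖u - z‖ ^ 2) ≤ f u - f z := by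
    rintro t ⟨ht0, ht1⟩
    have hconv := hf.2 hu hz ht0.le (sub_nonneg.2 ht1.le) (add_sub_cancel t 1)
    have hle := hmin (hf.1 hu hz ht0.le (sub_nonneg.2 ht1.le) (add_sub_cancel t 1))
    simp only [smul_eq_mul, mem_ofPred_eq] at hconv hle
    have : t * ((1 - t) * (m / 2 * ‖u - z‖ ^ 2)) ≤ t * (f u - f z) := by linarith
    exact le_of_mul_le_mul_left this ht0
  have hclosed : IsClosed {t : ℝ | (1 - t) * (m / 2 * ‖u - z‖ ^ 2) ≤ f u - f z} :=
    isClosed_le (by fun_prop) continuous_const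
  have h0 : (0 : ℝ) ∈ closure (Ioo 0 1) := by simp [closure_Ioo]
  have hlim := hclosed.closure_subset_iff.2 hseg h0
  simp only [mem_ofPred_eq, sub_zero, one_mul] at hlim
  linarith

end StrongConvexity

theorem stmt_16_general {d : ℕ} (P Q : EuclideanSpace ℝ (Fin d) → ℝ)
    (lam : ℝ)
    (hQ : ConvexOn ℝ Set.univ (fun x => Q x - (1 / (2 * lam)) * ‖x‖ ^ 2))
    (xk xnext yk : EuclideanSpace ℝ (Fin d))
    (hy : yk ∈ subdiff P xk)
    (hmin : IsMinOn (fun x => Q x - (inner ℝ yk x : ℝ)) Set.univ xnext) :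
    Q xnext - P xnext ≤ Q xk - P xk - (1 / (2 * lam)) * ‖xnext - xk‖ ^ 2 := by
  have hmod : 1 / lam / 2 = 1 / (2 * lam) := by ring
  have hQstrong : StrongConvexOn univ (1 / lam) Q :=
    strongConvexOn_iff_convex.2 (by simpa only [hmod] using hQ)
  have hgrowth := (hQstrong.sub_concaveOn ((innerₛₗ ℝ yk).concaveOn convex_univ))
    |>.add_sq_le_of_isMinOn hmin (mem_univ xnext) (mem_univ xk)
  have hsubgrad := hy xnext
  simp only [Pi.sub_apply, innerₛₗ_apply_apply, hmod, norm_sub_rev xk] at hgrowth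
  rw [inner_sub_right] at hsubgrad
  linarith

theorem stmt_16 {d : ℕ} (P Q : EuclideanSpace ℝ (Fin d) → ℝ)
    (lam : ℝ) (hlam : 0 < lam)
    (hP : ConvexOn ℝ Set.univ P)
    (hQ : ConvexOn ℝ Set.univ (fun x => Q x - (1 / (2 * lam)) * ‖x‖ ^ 2))
    (xk xnext yk : EuclideanSpace ℝ (Fin d))
    (hy : yk ∈ subdiff P xk)
    (hmin : IsMinOn (fun x => Q x - (inner ℝ yk x : ℝ)) Set.univ xnext) :
    Q xnext - P xnext ≤ Q xk - P xk - (1 / (2 * lam)) * ‖xnext - xk‖ ^ 2 :=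
  stmt_16_general P Q lam hQ xk xnext yk hy hmin
end
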